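/- arXiv:2401.02289 — 3 statements merged into one kernel-verified Lean document; each statement's English description precedes it below -/
import Mathlib

section
/- Let α and β be finite nonempty types and let ρ : Matrix (α × β) (α × β) ℂ be a density matrix with blocks A^{xy}. If all blocks of ρ pairwise commute, i.e. A^{rs} * A^{mn} = A^{mn} * A^{rs} for all r, s, m, n : α, then ρ is separable. -/
open Matrix Kronecker ComplexOrder

noncomputable section

/-- A density matrix: positive semidefinite with trace 1. -/
def IsDensityMatrix {n : Type*} [Fintype n] (ρ : Matrix n n ℂ) : Prop :=
  ρ.PosSemidef ∧ ρ.trace = 1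

/-- Separability of a bipartite density matrix: a convex combination of Kronecker
products of density matrices of the subsystems. -/
def Separable {α β : Type*} [Fintype α] [Fintype β]
    (ρ : Matrix (α × β) (α × β) ℂ) : Prop :=
  ∃ (n : ℕ) (p : Fin n → ℝ) (σ : Fin n → Matrix α α ℂ) (τ : Fin n → Matrix β β ℂ),
    (∀ k, 0 ≤ p k) ∧ (∑ k, p k = 1) ∧
    (∀ k, (σ k).PosSemidef ∧ (σ k).trace = 1) ∧
    (∀ k, (τ k).PosSemidef ∧ (τ k).trace = 1) ∧
    ρ = ∑ k, (p k : ℂ) • (σ k ⊗ₖ τ k)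

/-- The `(x,y)`-block of a bipartite matrix. -/
def matBlock {α β : Type*} (ρ : Matrix (α × β) (α × β) ℂ) (x y : α) :
    Matrix β β ℂ :=
  Matrix.of fun j l => ρ (x, j) (y, l)

/-- The graph Laplacian quantum state of a simple graph. -/
def lapState {V : Type*} [Fintype V] [DecidableEq V] (G : SimpleGraph V)
    [DecidableRel G.Adj] : Matrix V V ℂ :=
  ((2 * G.edgeFinset.card : ℂ))⁻¹ • G.lapMatrix ℂ

/-
Since `ρ` is Hermitian, `(A^{xy})ᴴ = A^{yx}`, so the blocks form a commuting family of matrices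
closed under adjoints. Their Hermitian and skew-Hermitian parts are then commuting Hermitian
matrices, which one unitary `U` diagonalises simultaneously. Conjugating `ρ` by `1 ⊗ U` makes every
block diagonal, i.e. `(1 ⊗ U)ᴴ ρ (1 ⊗ U) = ∑ₐ Dₐ ⊗ |a⟩⟨a|` with `Dₐ` a principal submatrix of a
positive semidefinite matrix. Hence `ρ = ∑ₐ Dₐ ⊗ U|a⟩⟨a|Uᴴ`, and normalising the `Dₐ` by their
traces exhibits `ρ` as a convex combination of product states.
-/

open Module.End in
theorem LinearMap.IsSymmetric.exists_orthonormalBasis_eigenvectors_of_pairwise_commute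
    {𝕜 E ι : Type*} [RCLike 𝕜] [NormedAddCommGroup E] [InnerProductSpace 𝕜 E]
    [FiniteDimensional 𝕜 E] {T : ι → Module.End 𝕜 E}
    (hT : ∀ i, (T i).IsSymmetric) (hC : Pairwise (Function.onFun Commute T)) :
    ∃ b : OrthonormalBasis (Fin (Module.finrank 𝕜 E)) 𝕜 E,
      ∀ k i, ∃ μ : 𝕜, T i (b k) = μ • b k := by
  classical
  let V : (ι → 𝕜) → Submodule 𝕜 E := fun χ => ⨅ i, eigenspace (T i) (χ i)
  have hV : DirectSum.IsInternal V := directSum_isInternal_of_pairwise_commute hT hC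
  -- the index type `ι → 𝕜` is infinite: restrict the decomposition to the nonzero summands
  have : Fintype {χ // V χ ≠ ⊥} :=
    (WellFoundedGT.finite_ne_bot_of_iSupIndep hV.submodule_iSupIndep).fintype
  have hV' : DirectSum.IsInternal fun χ : {χ // V χ ≠ ⊥} => V χ := by
    rw [DirectSum.isInternal_submodule_iff_iSupIndep_and_iSup_eq_top, iSup_ne_bot_subtype]
    exact ⟨hV.submodule_iSupIndep.comp Subtype.val_injective, hV.submodule_iSup_eq_top⟩
  have hO := (orthogonalFamily_iInf_eigenspaces hT).comp
    (Subtype.val_injective (p := fun χ => V χ ≠ ⊥))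
  refine ⟨hV'.subordinateOrthonormalBasis rfl hO, fun k i =>
    ⟨(hV'.subordinateOrthonormalBasisIndex rfl k hO).1 i, mem_eigenspace_iff.mp ?_⟩⟩
  exact (Submodule.mem_iInf _).mp (hV'.subordinateOrthonormalBasis_subordinate rfl k hO) i

namespace Matrix

theorem exists_unitary_isDiag_of_pairwise_commute {𝕜 n ι : Type*} [RCLike 𝕜] [Fintype n]
    [DecidableEq n] {M : ι → Matrix n n 𝕜} (hM : ∀ i, (M i).IsHermitian)
    (hC : Pairwise (Function.onFun Commute M)) :
    ∃ U ∈ unitaryGroup n 𝕜, ∀ i, (star U * M i * U).IsDiag := by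
  have hT : Pairwise (Function.onFun Commute fun i => toEuclideanLin (M i)) := fun i j hij => by
    simp only [Function.onFun, Commute, SemiconjBy, Module.End.mul_eq_comp, ← toLpLin_mul,
      (hC hij).eq]
  obtain ⟨b, hb⟩ := LinearMap.IsSymmetric.exists_orthonormalBasis_eigenvectors_of_pairwise_commute
    (fun i => isSymmetric_toEuclideanLin_iff.mpr (hM i)) hT
  let e : Fin (Module.finrank 𝕜 (EuclideanSpace 𝕜 n)) ≃ n := Fintype.equivOfCardEq (by simp)
  let b' := b.reindex e
  let U := (EuclideanSpace.basisFun n 𝕜).toBasis.toMatrix b'.toBasis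
  have hU : U ∈ unitaryGroup n 𝕜 :=
    (EuclideanSpace.basisFun n 𝕜).toMatrix_orthonormalBasis_mem_unitary b'
  have hcol : ∀ c, U *ᵥ Pi.single c 1 = ⇑(b' c) := fun c => by rw [mulVec_single_one]; rfl
  refine ⟨U, hU, fun i a c hac => ?_⟩
  obtain ⟨μ, hμ⟩ := hb (e.symm c) i
  have hμ' : M i *ᵥ ⇑(b' c) = μ • ⇑(b' c) := by
    simpa [b'] using congrArg WithLp.ofLp hμ
  have hcolμ : (star U * M i * U) *ᵥ Pi.single c 1 = μ • Pi.single c 1 := by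
    rw [← mulVec_mulVec, hcol, ← mulVec_mulVec, hμ', mulVec_smul, ← hcol, mulVec_mulVec,
      mem_unitaryGroup_iff'.mp hU, one_mulVec]
  simpa [mulVec_single_one, hac] using congrFun hcolμ a

theorem exists_unitary_isDiag_of_commute_of_commute_conjTranspose {n ι : Type*}
    [Fintype n] [DecidableEq n] {M : ι → Matrix n n ℂ} (hC : ∀ i j, Commute (M i) (M j))
    (hCH : ∀ i j, Commute (M i) (M j)ᴴ) :
    ∃ U ∈ unitaryGroup n ℂ, ∀ i, (star U * M i * U).IsDiag := by
  have hHC : ∀ i j, Commute (M i)ᴴ (M j) := fun i j => (hCH j i).symm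
  have hHH : ∀ i j, Commute (M i)ᴴ (M j)ᴴ := fun i j => by
    simpa [Commute, SemiconjBy, ← conjTranspose_mul] using congrArg conjTranspose (hC j i).eq
  let N : ι × Bool → Matrix n n ℂ := fun p =>
    if p.2 then M p.1 + (M p.1)ᴴ else Complex.I • (M p.1 - (M p.1)ᴴ)
  have hN : ∀ p, (N p).IsHermitian := by
    rintro ⟨i, _ | _⟩
    · simp [N, IsHermitian, conjTranspose_smul, conjTranspose_sub, ← smul_neg]
    · simp [N, IsHermitian, add_comm]
  have hform : ∀ p, ∃ c d : ℂ, N p = c • M p.1 + d • (M p.1)ᴴ := by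
    rintro ⟨i, _ | _⟩
    · exact ⟨Complex.I, -Complex.I, by simp [N, sub_eq_add_neg]⟩
    · exact ⟨1, 1, by simp [N]⟩
  have hNC : ∀ p q, Commute (N p) (N q) := by
    intro p q
    obtain ⟨c, d, hp⟩ := hform p
    obtain ⟨c', d', hq⟩ := hform q
    rw [hp, hq]
    refine Commute.add_left (Commute.add_right ?_ ?_) (Commute.add_right ?_ ?_) <;>
      refine Commute.smul_right (Commute.smul_left ?_ _) _
    exacts [hC _ _, hCH _ _, hHC _ _, hHH _ _]
  obtain ⟨U, hU, hdiag⟩ := exists_unitary_isDiag_of_pairwise_commute hN fun p q _ => hNC p q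
  refine ⟨U, hU, fun i => ?_⟩
  have hM : M i = (2 : ℂ)⁻¹ • (N (i, true) - Complex.I • N (i, false)) := by
    simp only [N, if_true, Bool.false_eq_true, if_false, smul_smul, Complex.I_mul_I,
      neg_one_smul, sub_neg_eq_add]
    rw [add_add_sub_cancel, ← two_smul ℂ, smul_smul, inv_mul_cancel₀ two_ne_zero, one_smul]
  rw [hM, Matrix.mul_smul, Matrix.smul_mul, Matrix.mul_sub, Matrix.sub_mul, Matrix.mul_smul,
    Matrix.smul_mul]
  exact ((hdiag _).sub ((hdiag _).smul _)).smul _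

end Matrix

theorem matBlock_conjTranspose {α β : Type*} (ρ : Matrix (α × β) (α × β) ℂ) (x y : α) :
    matBlock ρᴴ x y = (matBlock ρ y x)ᴴ :=
  rfl

theorem matBlock_one_kronecker_mul_mul_one_kronecker {α β γ : Type*} [Fintype α] [Fintype β]
    [DecidableEq α] (ρ : Matrix (α × β) (α × β) ℂ) (W : Matrix γ β ℂ) (V : Matrix β γ ℂ)
    (x y : α) :
    matBlock (((1 : Matrix α α ℂ) ⊗ₖ W) * ρ * ((1 : Matrix α α ℂ) ⊗ₖ V)) x y =
      W * matBlock ρ x y * V := by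
  ext j l
  simp [matBlock, mul_apply, one_apply, Fintype.sum_prod_type, ite_mul, Finset.sum_mul]

theorem eq_sum_kronecker_single_of_isDiag_matBlock {α β : Type*} [Fintype β] [DecidableEq β]
    {σ : Matrix (α × β) (α × β) ℂ} (hσ : ∀ x y, (matBlock σ x y).IsDiag) :
    σ = ∑ a, σ.submatrix (·, a) (·, a) ⊗ₖ single a a 1 := by
  ext ⟨x, j⟩ ⟨y, l⟩
  by_cases hjl : j = l
  · subst hjl
    simp [Matrix.sum_apply, single_apply]
  · rw [Matrix.sum_apply, Finset.sum_eq_zero fun a _ => ?_]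
    · exact hσ x y hjl
    · simp only [kroneckerMap_apply, single_apply]
      grind

theorem eq_sum_kronecker_of_isDiag_conj_matBlock {α β : Type*} [Fintype α] [Fintype β]
    [DecidableEq α] [DecidableEq β] {ρ : Matrix (α × β) (α × β) ℂ} {U : Matrix β β ℂ}
    (hU : U ∈ unitaryGroup β ℂ) (hdiag : ∀ x y, (star U * matBlock ρ x y * U).IsDiag) :
    ρ = ∑ a, (((1 : Matrix α α ℂ) ⊗ₖ U)ᴴ * ρ * (1 ⊗ₖ U)).submatrix (·, a) (·, a) ⊗ₖ
      (U * single a a 1 * star U) := by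
  set σ := ((1 : Matrix α α ℂ) ⊗ₖ U)ᴴ * ρ * (1 ⊗ₖ U)
  have hσ : ∀ x y, (matBlock σ x y).IsDiag := fun x y => by
    simp only [σ, conjTranspose_kronecker, conjTranspose_one]
    rw [matBlock_one_kronecker_mul_mul_one_kronecker]
    exact hdiag x y
  have hUU : ((1 : Matrix α α ℂ) ⊗ₖ U) * (1 ⊗ₖ U)ᴴ = 1 := by
    rw [conjTranspose_kronecker, conjTranspose_one, ← mul_kronecker_mul, mul_one,
      ← star_eq_conjTranspose, mem_unitaryGroup_iff.mp hU, one_kronecker_one]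
  have hρσ : ρ = (1 ⊗ₖ U) * σ * (1 ⊗ₖ U)ᴴ := by
    simp only [σ, ← mul_assoc, hUU, one_mul]
    rw [mul_assoc, hUU, mul_one]
  conv_lhs =>
    rw [hρσ, eq_sum_kronecker_single_of_isDiag_matBlock hσ, Finset.mul_sum, Finset.sum_mul]
  refine Finset.sum_congr rfl fun a _ => ?_
  rw [conjTranspose_kronecker, conjTranspose_one, ← mul_kronecker_mul, ← mul_kronecker_mul,
    one_mul, mul_one, star_eq_conjTranspose]

theorem isDensityMatrix_single {n : Type*} [Fintype n] [DecidableEq n] (i : n) :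
    IsDensityMatrix (single i i (1 : ℂ)) :=
  ⟨diagonal_single i (1 : ℂ) ▸ posSemidef_diagonal_iff.mpr (Pi.single_nonneg.mpr zero_le_one),
    trace_single_eq_same i 1⟩

theorem IsDensityMatrix.unitary_mul_mul_star {n : Type*} [Fintype n] [DecidableEq n]
    {τ U : Matrix n n ℂ} (hτ : IsDensityMatrix τ) (hU : U ∈ unitaryGroup n ℂ) :
    IsDensityMatrix (U * τ * star U) :=
  ⟨hτ.1.mul_mul_conjTranspose_same U, by
    rw [trace_mul_cycle, mem_unitaryGroup_iff'.mp hU, one_mul, hτ.2]⟩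

theorem Matrix.PosSemidef.exists_eq_smul_isDensityMatrix {n : Type*} [Fintype n] [Nonempty n]
    {D : Matrix n n ℂ} (hD : D.PosSemidef) :
    ∃ t : ℝ, 0 ≤ t ∧ ∃ σ, IsDensityMatrix σ ∧ D = (t : ℂ) • σ := by
  classical
  set t := D.trace.re
  have htr : D.trace = t := Complex.eq_re_of_ofReal_le hD.trace_nonneg
  have ht : 0 ≤ t := (Complex.nonneg_iff.mp hD.trace_nonneg).1
  rcases ht.eq_or_lt with ht0 | ht
  · refine ⟨0, le_rfl, _, isDensityMatrix_single (Classical.arbitrary n), ?_⟩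
    rw [hD.trace_eq_zero_iff.mp (by rw [htr, ← ht0, Complex.ofReal_zero])]
    simp
  · have ht' : (t : ℂ) ≠ 0 := by exact_mod_cast ht.ne'
    refine ⟨t, ht.le, (t : ℂ)⁻¹ • D, ⟨hD.smul (by simpa using ht.le), ?_⟩, ?_⟩
    · rw [trace_smul, smul_eq_mul, htr, inv_mul_cancel₀ ht']
    · rw [smul_smul, mul_inv_cancel₀ ht', one_smul]

theorem separable_of_eq_sum {α β ι : Type*} [Fintype α] [Fintype β] [Fintype ι]
    {ρ : Matrix (α × β) (α × β) ℂ} (p : ι → ℝ) (σ : ι → Matrix α α ℂ) (τ : ι → Matrix β β ℂ)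
    (hp : ∀ k, 0 ≤ p k) (hp1 : ∑ k, p k = 1) (hσ : ∀ k, IsDensityMatrix (σ k))
    (hτ : ∀ k, IsDensityMatrix (τ k)) (hρ : ρ = ∑ k, (p k : ℂ) • (σ k ⊗ₖ τ k)) :
    Separable ρ := by
  let e := (Fintype.equivFin ι).symm
  refine ⟨Fintype.card ι, p ∘ e, σ ∘ e, τ ∘ e, fun k => hp _, ?_, fun k => hσ _,
    fun k => hτ _, ?_⟩
  · rwa [Function.comp_def, e.sum_comp p]
  · rw [hρ]
    exact (e.sum_comp fun k => (p k : ℂ) • (σ k ⊗ₖ τ k)).symm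

theorem separable_of_eq_sum_kronecker {α β ι : Type*} [Fintype α] [Fintype β] [Fintype ι]
    {ρ : Matrix (α × β) (α × β) ℂ} (D : ι → Matrix α α ℂ) (τ : ι → Matrix β β ℂ)
    (hρ : ρ.trace = 1) (hD : ∀ k, (D k).PosSemidef) (hτ : ∀ k, IsDensityMatrix (τ k))
    (hsum : ρ = ∑ k, D k ⊗ₖ τ k) :
    Separable ρ := by
  have : Nonempty α := by
    by_contra h
    rw [not_nonempty_iff] at h
    rw [Matrix.trace, Finset.univ_eq_empty, Finset.sum_empty] at hρ
    exact zero_ne_one hρ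
  choose p hp σ hσ hDσ using fun k => (hD k).exists_eq_smul_isDensityMatrix
  have hsum' : ρ = ∑ k, (p k : ℂ) • (σ k ⊗ₖ τ k) := by
    simp only [hsum, hDσ, smul_kronecker]
  refine separable_of_eq_sum p σ τ hp ?_ hσ hτ hsum'
  have hp1 : ((∑ k, p k : ℝ) : ℂ) = 1 := by
    rw [← hρ, hsum']
    simp [trace_sum, trace_kronecker, (hσ _).2, (hτ _).2]
  exact_mod_cast hp1

theorem commuting_blocks_separable_general
    {α β : Type*} [Fintype α] [Fintype β]
    (ρ : Matrix (α × β) (α × β) ℂ) (hρ : IsDensityMatrix ρ)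
    (hcomm : ∀ r s m n : α,
      matBlock ρ r s * matBlock ρ m n = matBlock ρ m n * matBlock ρ r s) :
    Separable ρ := by
  classical
  obtain ⟨hpsd, htr⟩ := hρ
  have hadj : ∀ x y, (matBlock ρ x y)ᴴ = matBlock ρ y x := fun x y => by
    rw [← matBlock_conjTranspose, hpsd.1.eq]
  obtain ⟨U, hU, hdiag⟩ := exists_unitary_isDiag_of_commute_of_commute_conjTranspose
    (M := fun p : α × α => matBlock ρ p.1 p.2) (fun p q => hcomm _ _ _ _)
    (fun p q => by rw [hadj]; exact hcomm _ _ _ _)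
  exact separable_of_eq_sum_kronecker _ _ htr
    (fun a => (hpsd.conjTranspose_mul_mul_same _).submatrix _)
    (fun a => (isDensityMatrix_single a).unitary_mul_mul_star hU)
    (eq_sum_kronecker_of_isDiag_conj_matBlock hU fun x y => hdiag (x, y))

theorem commuting_blocks_separable
    {α β : Type*} [Fintype α] [Fintype β] [Nonempty α] [Nonempty β]
    (ρ : Matrix (α × β) (α × β) ℂ) (hρ : IsDensityMatrix ρ)
    (hcomm : ∀ r s m n : α,
      matBlock ρ r s * matBlock ρ m n = matBlock ρ m n * matBlock ρ r s) :
    Separable ρ :=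
  commuting_blocks_separable_general ρ hρ hcomm
end
end

section
/- Let α and β be finite nonempty types with decidable equality such that β has at least two elements, and let G be the simple graph on α × β whose adjacency relation is G.Adj (i,j) (k,l) ↔ (i = k ∧ j ≠ l) (i.e., every pair of distinct vertices with equal first coordinate is joined by an edge, and there are no other edges). Then the graph Laplacian state ρ_G is separable (as a state on ℂ^α ⊗ ℂ^β). -/
/-! The graph is `|α|` disjoint copies of the complete graph `K` on `β`, so its Laplacian is
`1 ⊗ₖ L_K`. Normalising by the trace, `ρ_G = (|α|⁻¹ • 1) ⊗ₖ ρ_K` is a product of two density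
matrices, hence separable with a single term. -/

open Matrix Kronecker ComplexOrder

noncomputable section

theorem Matrix.PosSemidef.map_ofReal {n : Type*} [Fintype n] [DecidableEq n] {A : Matrix n n ℝ}
    (hA : A.PosSemidef) : (A.map Complex.ofReal).PosSemidef := by
  open scoped MatrixOrder in
  obtain ⟨B, rfl⟩ := CStarAlgebra.nonneg_iff_eq_star_mul_self.mp hA.nonneg
  change ((Bᴴ * B).map Complex.ofRealHom).PosSemidef
  rw [Matrix.map_mul,
    conjTranspose_map (⇑Complex.ofRealHom) fun a => (Complex.conj_ofReal a).symm]
  exact posSemidef_conjTranspose_mul_self _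

namespace SimpleGraph

variable {V : Type*} [Fintype V] [DecidableEq V] (G : SimpleGraph V) [DecidableRel G.Adj]

theorem map_lapMatrix {R S : Type*} [Ring R] [Ring S] (f : R →+* S) :
    (G.lapMatrix R).map f = G.lapMatrix S := by
  ext i j
  by_cases hij : i = j <;> by_cases hadj : G.Adj i j <;>
    simp [lapMatrix, degMatrix, adjMatrix_apply, hij, hadj]

theorem trace_lapMatrix (R : Type*) [Ring R] :
    (G.lapMatrix R).trace = 2 * G.edgeFinset.card := by
  rw [lapMatrix, trace_sub, trace_adjMatrix, sub_zero, degMatrix, trace_diagonal]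
  simpa using congrArg (Nat.cast : ℕ → R) G.sum_degrees_eq_twice_card_edges

theorem posSemidef_lapMatrix_complex : (G.lapMatrix ℂ).PosSemidef := by
  rw [← map_lapMatrix G Complex.ofRealHom]
  exact (G.posSemidef_lapMatrix ℝ).map_ofReal

section Product

variable {α β : Type*} [Fintype α] [Fintype β]
  {G : SimpleGraph (α × β)} [DecidableRel G.Adj] {H : SimpleGraph β} [DecidableRel H.Adj]

theorem degree_eq_of_adj_iff (hAdj : ∀ i k j l, G.Adj (i, j) (k, l) ↔ i = k ∧ H.Adj j l)
    (i : α) (j : β) : G.degree (i, j) = H.degree j := by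
  have hN : G.neighborFinset (i, j) =
      (H.neighborFinset j).map ⟨Prod.mk i, Prod.mk_right_injective i⟩ := by
    ext ⟨k, l⟩
    simp [hAdj, eq_comm, and_comm]
  rw [← card_neighborFinset_eq_degree, hN, Finset.card_map, card_neighborFinset_eq_degree]

theorem lapMatrix_eq_one_kronecker [DecidableEq α] [DecidableEq β] {R : Type*} [Ring R]
    (hAdj : ∀ i k j l, G.Adj (i, j) (k, l) ↔ i = k ∧ H.Adj j l) :
    G.lapMatrix R = 1 ⊗ₖ H.lapMatrix R := by
  ext ⟨i, j⟩ ⟨k, l⟩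
  by_cases hik : i = k
  · subst hik
    by_cases hjl : j = l <;>
      simp [lapMatrix, degMatrix, adjMatrix_apply, hAdj, hjl,
        degree_eq_of_adj_iff hAdj]
  · simp [lapMatrix, degMatrix, adjMatrix_apply, hAdj, hik]

end Product

end SimpleGraph

theorem lapState_eq_inv_trace_smul {V : Type*} [Fintype V] [DecidableEq V] (G : SimpleGraph V)
    [DecidableRel G.Adj] : lapState G = (G.lapMatrix ℂ).trace⁻¹ • G.lapMatrix ℂ := by
  rw [lapState, G.trace_lapMatrix]

theorem isDensityMatrix_lapState {V : Type*} [Fintype V] [DecidableEq V] {G : SimpleGraph V}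
    [DecidableRel G.Adj] (hG : G ≠ ⊥) : IsDensityMatrix (lapState G) := by
  have hE : (2 * G.edgeFinset.card : ℂ) ≠ 0 := by
    have := (G.edgeFinset_nonempty.mpr hG).card_pos
    norm_cast
    omega
  refine ⟨G.posSemidef_lapMatrix_complex.smul (by positivity), ?_⟩
  rw [lapState, trace_smul, G.trace_lapMatrix, smul_eq_mul, inv_mul_cancel₀ hE]

theorem isDensityMatrix_inv_card_smul_one (n : Type*) [Fintype n] [DecidableEq n] [Nonempty n] :
    IsDensityMatrix ((Fintype.card n : ℂ)⁻¹ • (1 : Matrix n n ℂ)) := by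
  refine ⟨PosSemidef.one.smul (by positivity), ?_⟩
  rw [trace_smul, trace_one, smul_eq_mul, inv_mul_cancel₀ (by simp)]

theorem IsDensityMatrix.separable_kronecker {α β : Type*} [Fintype α] [Fintype β]
    {σ : Matrix α α ℂ} {τ : Matrix β β ℂ} (hσ : IsDensityMatrix σ) (hτ : IsDensityMatrix τ) :
    Separable (σ ⊗ₖ τ) :=
  ⟨1, fun _ => 1, fun _ => σ, fun _ => τ, fun _ => zero_le_one, by simp, fun _ => hσ,
    fun _ => hτ, by simp⟩

theorem lapState_eq_kronecker {α β : Type*} [Fintype α] [Fintype β] [DecidableEq α]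
    [DecidableEq β] {G : SimpleGraph (α × β)} [DecidableRel G.Adj] {H : SimpleGraph β}
    [DecidableRel H.Adj] (hAdj : ∀ i k j l, G.Adj (i, j) (k, l) ↔ i = k ∧ H.Adj j l) :
    lapState G = ((Fintype.card α : ℂ)⁻¹ • (1 : Matrix α α ℂ)) ⊗ₖ lapState H := by
  rw [lapState_eq_inv_trace_smul, lapState_eq_inv_trace_smul, G.lapMatrix_eq_one_kronecker hAdj,
    trace_kronecker, trace_one, smul_kronecker, kronecker_smul, smul_smul, mul_inv]

theorem equal_first_coordinate_complete_graph_separable_general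
    {α β : Type*} [Fintype α] [Fintype β] [Nonempty α]
    [DecidableEq α] [DecidableEq β] [Nontrivial β]
    (G : SimpleGraph (α × β)) [DecidableRel G.Adj]
    (hAdj : ∀ (i k : α) (j l : β), G.Adj (i, j) (k, l) ↔ (i = k ∧ j ≠ l)) :
    Separable (lapState G) := by
  rw [lapState_eq_kronecker (H := ⊤) (by simpa using hAdj)]
  exact (isDensityMatrix_inv_card_smul_one α).separable_kronecker
    (isDensityMatrix_lapState top_ne_bot)

theorem equal_first_coordinate_complete_graph_separable
    {α β : Type*} [Fintype α] [Fintype β] [Nonempty α] [Nonempty β]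
    [DecidableEq α] [DecidableEq β] [Nontrivial β]
    (G : SimpleGraph (α × β)) [DecidableRel G.Adj]
    (hAdj : ∀ (i k : α) (j l : β), G.Adj (i, j) (k, l) ↔ (i = k ∧ j ≠ l)) :
    Separable (lapState G) :=
  equal_first_coordinate_complete_graph_separable_general G hAdj
end
end

section
/- Let α and β be finite nonempty types with decidable equality and let G be a simple graph on α × β with at least one edge such that for all i, k : α and j, l : β, if G.Adj (i,j) (k,l) then G.Adj (i,l) (k,j) (every neighbourhood relation v_{ij} ∈ N(v_{kl}) is accompanied by v_{il} ∈ N(v_{kj})). Then the graph Laplacian state ρ_G is separable (as a state on ℂ^α ⊗ ℂ^β). -/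
open Matrix Kronecker ComplexOrder

noncomputable section

/-! The Laplacian is `½ ∑ |e_v - e_w⟩⟨e_v - e_w|` over ordered adjacent pairs `(v, w)`. The swap
`((i, j), (k, l)) ↦ ((i, l), (k, j))` permutes adjacent pairs, so every term can be paired with
its swapped partner, and by the parallelogram law the two together equal
`½ (|e_i - e_k⟩⟨·| ⊗ |e_j + e_l⟩⟨·| + |e_i + e_k⟩⟨·| ⊗ |e_j - e_l⟩⟨·|)`. Hence the Laplacian lies
in the cone generated by product states, and a trace-one element of that cone is separable. -/

section SeparableCone

variable {α β : Type*} [Fintype α] [Fintype β]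

variable (α β) in
def separableCone : PointedCone ℝ (Matrix (α × β) (α × β) ℂ) :=
  PointedCone.hull ℝ {ρ | ∃ σ τ, IsDensityMatrix σ ∧ IsDensityMatrix τ ∧ ρ = σ ⊗ₖ τ}

theorem separable_of_mem_separableCone {ρ : Matrix (α × β) (α × β) ℂ}
    (hρ : ρ ∈ separableCone α β) (htr : ρ.trace = 1) : Separable ρ := by
  obtain ⟨n, c, x, rfl⟩ := Submodule.mem_span_set'.mp hρ
  choose σ τ hσ hτ hx using fun k => (x k).2
  have hsum : ∑ k, (c k : ℂ) • (σ k ⊗ₖ τ k) = ∑ k, c k • (x k : Matrix (α × β) (α × β) ℂ) := by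
    simp [hx]
  refine ⟨n, fun k => c k, σ, τ, fun k => (c k).2, ?_, hσ, hτ, hsum.symm⟩
  rw [← hsum, trace_sum] at htr
  simp only [trace_smul, trace_kronecker, (hσ _).2, (hτ _).2, mul_one, smul_eq_mul] at htr
  exact_mod_cast htr

theorem smul_mem_separableCone {z : ℂ} (hz : 0 ≤ z) {ρ : Matrix (α × β) (α × β) ℂ}
    (hρ : ρ ∈ separableCone α β) : z • ρ ∈ separableCone α β := by
  obtain ⟨hre, him⟩ := Complex.nonneg_iff.mp hz
  have : z = (⟨z.re, hre⟩ : {r : ℝ // 0 ≤ r}) := Complex.ext rfl him.symm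
  rw [this, Complex.coe_smul]
  exact Submodule.smul_mem _ _ hρ

theorem Matrix.PosSemidef.isDensityMatrix_inv_trace_smul {n : Type*} [Fintype n]
    {A : Matrix n n ℂ} (hA : A.PosSemidef) (htr : A.trace ≠ 0) : IsDensityMatrix (A.trace⁻¹ • A) :=
  ⟨hA.smul (inv_nonneg.mpr hA.trace_nonneg), by rw [trace_smul, smul_eq_mul, inv_mul_cancel₀ htr]⟩

theorem kronecker_mem_separableCone {A : Matrix α α ℂ} {B : Matrix β β ℂ}
    (hA : A.PosSemidef) (hB : B.PosSemidef) : A ⊗ₖ B ∈ separableCone α β := by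
  rcases eq_or_ne A.trace 0 with hAtr | hAtr
  · simp [hA.trace_eq_zero_iff.mp hAtr]
  rcases eq_or_ne B.trace 0 with hBtr | hBtr
  · simp [hB.trace_eq_zero_iff.mp hBtr]
  have hAB : A ⊗ₖ B = (A.trace * B.trace) • ((A.trace⁻¹ • A) ⊗ₖ (B.trace⁻¹ • B)) := by
    rw [smul_kronecker, kronecker_smul, smul_smul, smul_smul]
    field_simp
    rw [one_smul]
  rw [hAB]
  exact smul_mem_separableCone (mul_nonneg hA.trace_nonneg hB.trace_nonneg)
    (PointedCone.subset_hull ⟨_, _, hA.isDensityMatrix_inv_trace_smul hAtr,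
      hB.isDensityMatrix_inv_trace_smul hBtr, rfl⟩)

end SeparableCone

def ketBra {n R : Type*} [Mul R] [Star R] (u : n → R) : Matrix n n R := vecMulVec u (star u)

theorem posSemidef_ketBra {n : Type*} [Fintype n] (u : n → ℂ) : (ketBra u).PosSemidef :=
  posSemidef_vecMulVec_self_star u

section Laplacian

variable {V R : Type*} [Fintype V] [DecidableEq V] [CommRing R]

theorem two_smul_lapMatrix_eq_sum_ketBra [StarRing R] (G : SimpleGraph V)
    [DecidableRel G.Adj] :
    (2 : R) • G.lapMatrix R = ∑ p ∈ Finset.univ.filter (fun p : V × V => G.Adj p.1 p.2),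
      ketBra (Pi.single p.1 1 - Pi.single p.2 1) := by
  rw [Finset.sum_filter, Fintype.sum_prod_type]
  simp_rw [← Finset.sum_filter, ← SimpleGraph.neighborFinset_eq_filter]
  ext a b
  simp only [ketBra, Matrix.sum_apply, vecMulVec_apply, Pi.star_apply, star_sub, Pi.sub_apply,
    Pi.single_apply, apply_ite star, star_one, star_zero, mul_sub, sub_mul, Finset.sum_sub_distrib]
  simp only [SimpleGraph.lapMatrix, SimpleGraph.degMatrix, Matrix.smul_apply, Matrix.sub_apply,
    diagonal_apply, SimpleGraph.adjMatrix_apply, G.adj_comm _ b, smul_eq_mul, mul_ite, mul_one,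
    mul_zero, Finset.sum_ite_irrel, Finset.sum_const, SimpleGraph.card_neighborFinset_eq_degree,
    nsmul_eq_mul, Finset.sum_ite_eq, Finset.mem_univ, if_true,
    SimpleGraph.mem_neighborFinset]
  simp_rw [← ite_and, and_comm (a := G.Adj b _), ite_and]
  by_cases hab : a = b
  · subst hab
    simp [← SimpleGraph.neighborFinset_eq_filter, two_mul]
  · simp only [hab, if_false, zero_sub, mul_neg, mul_ite, mul_one, mul_zero, Finset.sum_ite_eq,
      Finset.mem_univ, if_true, Finset.sum_const_zero, sub_zero]
    split_ifs <;> norm_num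

theorem trace_lapMatrix (G : SimpleGraph V) [DecidableRel G.Adj] :
    (G.lapMatrix R).trace = 2 * G.edgeFinset.card := by
  rw [SimpleGraph.lapMatrix, trace_sub, SimpleGraph.trace_adjMatrix, sub_zero,
    SimpleGraph.degMatrix, trace_diagonal, ← Nat.cast_sum, G.sum_degrees_eq_twice_card_edges]
  norm_cast

theorem trace_lapState {G : SimpleGraph V} [DecidableRel G.Adj] (hE : G.edgeFinset.Nonempty) :
    (lapState G).trace = 1 := by
  rw [lapState, trace_smul, trace_lapMatrix, smul_eq_mul, inv_mul_cancel₀]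
  exact_mod_cast (mul_pos two_pos hE.card_pos).ne'

end Laplacian

section ProductGraph

variable {α β : Type*} [DecidableEq α] [DecidableEq β]

/-- The parallelogram law for `x = e_ij - e_kl` and `y = e_il - e_kj`, whose sum and difference
are product vectors. -/
theorem two_smul_ketBra_add_ketBra_swap {R : Type*} [CommRing R] [StarRing R]
    (i k : α) (j l : β) :
    (2 : R) • (ketBra (Pi.single (i, j) 1 - Pi.single (k, l) 1 : α × β → R) +
        ketBra (Pi.single (i, l) 1 - Pi.single (k, j) 1 : α × β → R)) =
      ketBra (Pi.single i 1 - Pi.single k 1 : α → R) ⊗ₖ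
          ketBra (Pi.single j 1 + Pi.single l 1 : β → R) +
        ketBra (Pi.single i 1 + Pi.single k 1 : α → R) ⊗ₖ
          ketBra (Pi.single j 1 - Pi.single l 1 : β → R) := by
  ext ⟨a, b⟩ ⟨c, d⟩
  simp only [ketBra, Matrix.add_apply, Matrix.smul_apply, kroneckerMap_apply, vecMulVec_apply,
    Pi.star_apply, Pi.add_apply, Pi.sub_apply, star_add, star_sub, Pi.single_apply,
    apply_ite star, star_one, star_zero, Prod.mk.injEq, ite_and, smul_eq_mul]
  split_ifs <;> ring

variable [Fintype α] [Fintype β]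

theorem ketBra_add_ketBra_swap_mem_separableCone (i k : α) (j l : β) :
    ketBra (Pi.single (i, j) 1 - Pi.single (k, l) 1 : α × β → ℂ) +
        ketBra (Pi.single (i, l) 1 - Pi.single (k, j) 1 : α × β → ℂ) ∈ separableCone α β := by
  rw [← inv_smul_smul₀ (two_ne_zero : (2 : ℂ) ≠ 0) (_ + _), two_smul_ketBra_add_ketBra_swap]
  exact smul_mem_separableCone (by positivity)
    (add_mem (kronecker_mem_separableCone (posSemidef_ketBra _) (posSemidef_ketBra _))
      (kronecker_mem_separableCone (posSemidef_ketBra _) (posSemidef_ketBra _)))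

theorem lapMatrix_mem_separableCone (G : SimpleGraph (α × β)) [DecidableRel G.Adj]
    (hAdj : ∀ (i k : α) (j l : β), G.Adj (i, j) (k, l) → G.Adj (i, l) (k, j)) :
    G.lapMatrix ℂ ∈ separableCone α β := by
  set P := Finset.univ.filter (fun p : (α × β) × (α × β) => G.Adj p.1 p.2)
  let swap (p : (α × β) × (α × β)) : (α × β) × (α × β) := ((p.1.1, p.2.2), (p.2.1, p.1.2))
  have hswap : ∑ p ∈ P, ketBra (Pi.single (swap p).1 1 - Pi.single (swap p).2 1 : α × β → ℂ) =
      ∑ p ∈ P, ketBra (Pi.single p.1 1 - Pi.single p.2 1 : α × β → ℂ) :=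
    Finset.sum_nbij' swap swap
      (fun _ hp => by simpa [P] using hAdj _ _ _ _ (by simpa [P] using hp))
      (fun _ hp => by simpa [P] using hAdj _ _ _ _ (by simpa [P] using hp))
      (fun _ _ => rfl) (fun _ _ => rfl) (fun _ _ => rfl)
  have h4 : (4 : ℂ) • G.lapMatrix ℂ =
      ∑ p ∈ P, (ketBra (Pi.single p.1 1 - Pi.single p.2 1 : α × β → ℂ) +
        ketBra (Pi.single (swap p).1 1 - Pi.single (swap p).2 1 : α × β → ℂ)) := by
    rw [Finset.sum_add_distrib, hswap, ← two_smul ℂ, ← two_smul_lapMatrix_eq_sum_ketBra,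
      smul_smul]
    norm_num
  have hmem : (4 : ℂ) • G.lapMatrix ℂ ∈ separableCone α β :=
    h4 ▸ sum_mem fun p _ => ketBra_add_ketBra_swap_mem_separableCone _ _ _ _
  simpa [smul_smul] using smul_mem_separableCone (by positivity : (0 : ℂ) ≤ 4⁻¹) hmem

end ProductGraph

theorem neighbourhood_swap_closed_separable_general
    {α β : Type*} [Fintype α] [Fintype β]
    [DecidableEq α] [DecidableEq β]
    (G : SimpleGraph (α × β)) [DecidableRel G.Adj]
    (hE : G.edgeFinset.Nonempty)
    (hAdj : ∀ (i k : α) (j l : β), G.Adj (i, j) (k, l) → G.Adj (i, l) (k, j)) :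
    Separable (lapState G) :=
  separable_of_mem_separableCone
    (smul_mem_separableCone (by positivity) (lapMatrix_mem_separableCone G hAdj))
    (trace_lapState hE)

theorem neighbourhood_swap_closed_separable
    {α β : Type*} [Fintype α] [Fintype β] [Nonempty α] [Nonempty β]
    [DecidableEq α] [DecidableEq β]
    (G : SimpleGraph (α × β)) [DecidableRel G.Adj]
    (hE : G.edgeFinset.Nonempty)
    (hAdj : ∀ (i k : α) (j l : β), G.Adj (i, j) (k, l) → G.Adj (i, l) (k, j)) :
    Separable (lapState G) :=
  neighbourhood_swap_closed_separable_general G hE hAdj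
end
end
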